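/- Let A, Ω, b₁ be real numbers with A > 0, Ω > 0, b₁ > 0, and set μ = ((9/70)·A·Ω^{3/2}·b₁^{3/2})^{1/2} and ν = −(16/9)·μ³. Then the function u(x, t) = Ω·b₁·(cosh(μx + νt))^{−4/3}, with real-number powers, satisfies the equation u_t + A·u^{3/2}·u_x + u_{xxx} = 0 for all (x, t) ∈ ℝ², where u^{3/2} is a real power (u > 0). -/

import Mathlib

/-! For a travelling wave `u = C φ(μ x + ν t)` with `φ = cosh ^ q` one has
`φ' = q cosh^(q-1) sinh` and `φ''' = q sinh (q² cosh^(q-1) - (q-1)(q-2) cosh^(q-3))`,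
while `u ^ p = C ^ p cosh⁻²` as soon as `q p = -2`. After factoring out `C q sinh`, the
`cosh^(q-1)` terms of the gKdV equation cancel iff `ν = -q² μ³` and the `cosh^(q-3)` terms
cancel iff `(q-1)(q-2) μ² = A C ^ p`; for `p = 3/2`, `q = -4/3` these are the stated `ν`, `μ`. -/

open Real

section

variable {𝕜 F : Type*} [NontriviallyNormedField 𝕜] [NormedAddCommGroup F] [NormedSpace 𝕜 F]

theorem iteratedDeriv_comp_mul_add {n : ℕ} {f : 𝕜 → F} (hf : ContDiff 𝕜 n f) (a b x : 𝕜) :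
    iteratedDeriv n (fun x => f (a * x + b)) x = a ^ n • iteratedDeriv n f (a * x + b) := by
  have hshift : ContDiff 𝕜 n (fun z => f (z + b)) := hf.comp (contDiff_id.add contDiff_const)
  rw [iteratedDeriv_comp_const_smul hshift a, iteratedDeriv_comp_add_const]

theorem deriv_comp_mul_add {f : 𝕜 → F} (hf : ContDiff 𝕜 1 f) (a b x : 𝕜) :
    deriv (fun x => f (a * x + b)) x = a • deriv f (a * x + b) := by
  simpa only [iteratedDeriv_one, pow_one] using iteratedDeriv_comp_mul_add hf a b x

end

theorem contDiff_cosh_rpow {n : WithTop ℕ∞} (q : ℝ) : ContDiff ℝ n (fun z => cosh z ^ q) :=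
  contDiff_cosh.rpow_const_of_ne fun z => (cosh_pos z).ne'

theorem hasDerivAt_cosh_rpow (q z : ℝ) :
    HasDerivAt (fun z => cosh z ^ q) (q * cosh z ^ (q - 1) * sinh z) z :=
  ((hasDerivAt_rpow_const (p := q) (Or.inl (cosh_pos z).ne')).comp z
    (hasDerivAt_cosh z)).congr_deriv (by ring)

theorem hasDerivAt_cosh_rpow_mul_sinh (q z : ℝ) :
    HasDerivAt (fun z => cosh z ^ q * sinh z)
      ((q + 1) * cosh z ^ (q + 1) - q * cosh z ^ (q - 1)) z := by
  have hc : cosh z ≠ 0 := (cosh_pos z).ne'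
  have h1 : cosh z ^ (q + 1) = cosh z ^ q * cosh z := rpow_add_one hc q
  have h2 : cosh z ^ (q + 1) = cosh z ^ (q - 1) * cosh z ^ 2 := by
    rw [show q + 1 = q - 1 + (2 : ℕ) by push_cast; ring, rpow_add_natCast hc]
  refine ((hasDerivAt_cosh_rpow q z).mul (hasDerivAt_sinh z)).congr_deriv ?_
  linear_combination q * cosh z ^ (q - 1) * sinh_sq z - h1 - q * h2

theorem iteratedDeriv_three_cosh_rpow (q z : ℝ) :
    iteratedDeriv 3 (fun z => cosh z ^ q) z
      = q * sinh z * (q ^ 2 * cosh z ^ (q - 1) - (q - 1) * (q - 2) * cosh z ^ (q - 3)) := by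
  have d1 : deriv (fun z => cosh z ^ q) = fun z => q * (cosh z ^ (q - 1) * sinh z) := by
    funext z; rw [(hasDerivAt_cosh_rpow q z).deriv, mul_assoc]
  have d2 : deriv (fun z => q * (cosh z ^ (q - 1) * sinh z))
      = fun z => q * (q * cosh z ^ q - (q - 1) * cosh z ^ (q - 2)) := by
    funext z
    rw [((hasDerivAt_cosh_rpow_mul_sinh (q - 1) z).const_mul q).deriv,
      show q - 1 + 1 = q by ring, show q - 1 - 1 = q - 2 by ring]
  have d3 : HasDerivAt (fun z => q * (q * cosh z ^ q - (q - 1) * cosh z ^ (q - 2)))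
      (q * sinh z * (q ^ 2 * cosh z ^ (q - 1) - (q - 1) * (q - 2) * cosh z ^ (q - 3))) z := by
    refine ((((hasDerivAt_cosh_rpow q z).const_mul q).sub
      ((hasDerivAt_cosh_rpow (q - 2) z).const_mul (q - 1))).const_mul q).congr_deriv ?_
    rw [show q - 2 - 1 = q - 3 by ring]; ring
  rw [iteratedDeriv_succ, iteratedDeriv_succ, iteratedDeriv_one, d1, d2, d3.deriv]

theorem gKdV_cosh_rpow_solitaryWave {A p q C μ ν : ℝ} (hC : 0 ≤ C) (hqp : q * p = -2)
    (hμ : (q - 1) * (q - 2) * μ ^ 2 = A * C ^ p) (hν : ν = -q ^ 2 * μ ^ 3)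
    {u : ℝ → ℝ → ℝ} (hu : ∀ x t, u x t = C * cosh (μ * x + ν * t) ^ q) (x t : ℝ) :
    deriv (fun τ => u x τ) t + A * u x t ^ p * deriv (fun y => u y t) x
      + iteratedDeriv 3 (fun y => u y t) x = 0 := by
  have hspace : (fun y => u y t) = fun y => C * cosh (μ * y + ν * t) ^ q := funext (hu · t)
  have htime : (fun τ => u x τ) = fun τ => C * cosh (ν * τ + μ * x) ^ q := by
    funext τ; rw [hu, add_comm]
  rw [htime, hspace, iteratedDeriv_const_mul_field, deriv_const_mul_field, deriv_const_mul_field,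
    deriv_comp_mul_add (contDiff_cosh_rpow q), deriv_comp_mul_add (contDiff_cosh_rpow q),
    iteratedDeriv_comp_mul_add (contDiff_cosh_rpow q), add_comm (ν * t), hu,
    (hasDerivAt_cosh_rpow q _).deriv, iteratedDeriv_three_cosh_rpow]
  set z := μ * x + ν * t
  have hc : 0 < cosh z := cosh_pos z
  have hpow : (C * cosh z ^ q) ^ p = C ^ p * cosh z ^ (-2 : ℝ) := by
    rw [mul_rpow hC (rpow_nonneg hc.le q), ← rpow_mul hc.le, hqp]
  have hdecay : cosh z ^ (-2 : ℝ) * cosh z ^ (q - 1) = cosh z ^ (q - 3) := by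
    rw [← rpow_add hc]; ring_nf
  rw [hpow]
  simp only [smul_eq_mul]
  linear_combination (C * q * cosh z ^ (q - 1) * sinh z) * hν
    - (C * q * μ * sinh z * cosh z ^ (q - 3)) * hμ
    + (A * C ^ p * C * μ * q * sinh z) * hdecay

theorem stmt13 (A Ω b₁ μ ν : ℝ) (hA : 0 < A) (hΩ : 0 < Ω) (hb : 0 < b₁)
    (hμ : μ = ((9 / 70) * A * Ω ^ ((3 : ℝ) / 2) * b₁ ^ ((3 : ℝ) / 2)) ^ ((1 : ℝ) / 2))
    (hν : ν = -(16 / 9) * μ ^ 3)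
    (u : ℝ → ℝ → ℝ)
    (hu : ∀ x t : ℝ, u x t = Ω * b₁ * (Real.cosh (μ * x + ν * t)) ^ (-(4 : ℝ) / 3)) :
    ∀ x t : ℝ,
      deriv (fun τ => u x τ) t + A * (u x t) ^ ((3 : ℝ) / 2) * deriv (fun y => u y t) x
        + iteratedDeriv 3 (fun y => u y t) x = 0 := by
  have hμ_sq : μ ^ 2 = 9 / 70 * A * (Ω * b₁) ^ ((3 : ℝ) / 2) := by
    rw [hμ, ← rpow_natCast, ← rpow_mul (by positivity), mul_rpow hΩ.le hb.le]
    norm_num [mul_assoc]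
  refine gKdV_cosh_rpow_solitaryWave (mul_pos hΩ hb).le (by norm_num) ?_ ?_ hu
  · rw [hμ_sq]; ring
  · rw [hν]; ring
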